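/- Let m ≥ 2 be an integer with m ≠ 4, and let I ⊆ ℝ be a nonempty open interval. There is no twice continuously differentiable function f : I → ℝ with f(u) > 0 for all u ∈ I that satisfies simultaneously, at every point of I, the two ordinary differential equations f·f'' = ((m+2)/3)·f² − (m²(m+2)/(4(m−1)))·f⁴ + ((m+5)/(m+2))·(f')² and f·f'' = −m·f² + (m²(m+8)/(4(m−1)))·f⁴ + (3(m−1)/(m+2))·(f')². -/
import Mathlib


/-- There is no positive twice continuously differentiable function on a nonempty
open interval satisfying both ODEs
`f·f'' = ((m+2)/3)·f² − (m²(m+2)/(4(m−1)))·f⁴ + ((m+5)/(m+2))·(f')²` and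
`f·f'' = −m·f² + (m²(m+8)/(4(m−1)))·f⁴ + (3(m−1)/(m+2))·(f')²`, for an integer
`m ≥ 2`, `m ≠ 4`. -/
theorem stmt_0 (m : ℕ) (hm2 : 2 ≤ m) (hm4 : m ≠ 4) (a b : ℝ) (hab : a < b) :
    ¬ ∃ f f' f'' : ℝ → ℝ,
      (∀ u ∈ Set.Ioo a b, HasDerivAt f (f' u) u) ∧
      (∀ u ∈ Set.Ioo a b, HasDerivAt f' (f'' u) u) ∧
      ContinuousOn f'' (Set.Ioo a b) ∧
      (∀ u ∈ Set.Ioo a b, 0 < f u) ∧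
      (∀ u ∈ Set.Ioo a b,
        f u * f'' u =
          ((m : ℝ) + 2) / 3 * (f u) ^ 2
            - (m : ℝ) ^ 2 * ((m : ℝ) + 2) / (4 * ((m : ℝ) - 1)) * (f u) ^ 4
            + ((m : ℝ) + 5) / ((m : ℝ) + 2) * (f' u) ^ 2) ∧
      (∀ u ∈ Set.Ioo a b,
        f u * f'' u =
          -(m : ℝ) * (f u) ^ 2
            + (m : ℝ) ^ 2 * ((m : ℝ) + 8) / (4 * ((m : ℝ) - 1)) * (f u) ^ 4
            + 3 * ((m : ℝ) - 1) / ((m : ℝ) + 2) * (f' u) ^ 2) := by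
  rintro ⟨f, f', f'', hdf, hdf', -, hfpos, hode1, hode2⟩
  set t : ℝ := (m : ℝ) with htdef
  have ht2 : (2:ℝ) ≤ t := by rw [htdef]; exact_mod_cast hm2
  have ht4 : t ≠ 4 := by
    rw [htdef]
    intro h
    exact hm4 (by exact_mod_cast h)
  have ht1 : t - 1 ≠ 0 := by intro h; linarith
  have htp2 : t + 2 ≠ 0 := by intro h; linarith
  have ht84 : 8 - 2*t ≠ 0 := by intro h; apply ht4; linarith
  -- cleared versions of the two ODEs
  have H1 : ∀ u ∈ Set.Ioo a b,
      f u * f'' u * (3 * (4 * (t - 1)) * (t + 2)) =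
        ((t + 2) * (f u) ^ 2 * (4 * (t - 1)) - 3 * (t ^ 2 * (t + 2) * (f u) ^ 4)) * (t + 2)
          + (t + 5) * (f' u) ^ 2 * (3 * (4 * (t - 1))) := by
    intro u hu
    have h := hode1 u hu
    field_simp at h
    linarith [h]
  have H2 : ∀ u ∈ Set.Ioo a b,
      f u * f'' u * (4 * (t - 1) * (t + 2)) =
        (-(t * (f u) ^ 2) * (4 * (t - 1)) + t ^ 2 * (t + 8) * (f u) ^ 4) * (t + 2)
          + 3 * (t - 1) * (f' u) ^ 2 * (4 * (t - 1)) := by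
    intro u hu
    have h := hode2 u hu
    field_simp at h
    linarith [h]
  -- relation R from subtracting the ODEs
  have hR : ∀ u ∈ Set.Ioo a b,
      12*(t-1)*(8-2*t)*(f' u)^2
        = 6*t^2*(t+5)*(t+2)*(f u)^4 - 4*(4*t+2)*(t-1)*(t+2)*(f u)^2 := by
    intro u hu
    linear_combination 3 * (H2 u hu) - (H1 u hu)
  by_cases hcase : ∀ u ∈ Set.Ioo a b, f' u = 0
  · -- f' ≡ 0, hence f'' = 0, and the two ODEs are inconsistent pointwise
    set u₀ := (a+b)/2 with hu₀def
    have hu₀ : u₀ ∈ Set.Ioo a b := ⟨by simp [hu₀def]; linarith, by simp [hu₀def]; linarith⟩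
    have hev : f' =ᶠ[nhds u₀] fun _ => (0:ℝ) :=
      Filter.eventuallyEq_of_mem (isOpen_Ioo.mem_nhds hu₀) hcase
    have hzero : HasDerivAt (fun _ => (0:ℝ)) (f'' u₀) u₀ :=
      (hdf' u₀ hu₀).congr_of_eventuallyEq hev.symm
    have hf''0 : f'' u₀ = 0 := by
      have := hzero.unique (hasDerivAt_const u₀ (0:ℝ))
      linarith
    have hfp0 : f' u₀ = 0 := hcase u₀ hu₀
    have h1 := H1 u₀ hu₀
    have h2 := H2 u₀ hu₀
    rw [hf''0, hfp0] at h1 h2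
    have hx : (0:ℝ) < f u₀ := hfpos u₀ hu₀
    have key : 3*t^2*(t+2)^2*(8-2*t)*(f u₀)^4 = 0 := by
      linear_combination (-3*t) * h1 - (3*(t+2)) * h2
    have ht0 : t ≠ 0 := by intro h; linarith
    have hx0 : f u₀ ≠ 0 := ne_of_gt hx
    exact (mul_ne_zero (mul_ne_zero (mul_ne_zero
      (mul_ne_zero (by norm_num : (3:ℝ) ≠ 0) (pow_ne_zero 2 ht0))
      (pow_ne_zero 2 htp2)) ht84) (pow_ne_zero 4 hx0)) key
  · push_neg at hcase
    obtain ⟨u₀, hu₀, hfp⟩ := hcase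
    set x := f u₀ with hxdef
    have hx : (0:ℝ) < x := hfpos u₀ hu₀
    -- the function g ≡ 0 on the interval
    set g : ℝ → ℝ := fun u =>
      12*(t-1)*(8-2*t)*(f' u)^2 - 6*t^2*(t+5)*(t+2)*(f u)^4
        + 4*(4*t+2)*(t-1)*(t+2)*(f u)^2 with hgdef
    have hg0 : ∀ u ∈ Set.Ioo a b, g u = 0 := by
      intro u hu
      have := hR u hu
      simp only [hgdef]
      linarith
    -- derivative of g at u₀
    have hA : HasDerivAt (fun u => (f' u)^2) (2 * (f' u₀)^1 * f'' u₀) u₀ :=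
      (hdf' u₀ hu₀).pow 2
    have hB : HasDerivAt (fun u => (f u)^4) (4 * (f u₀)^3 * f' u₀) u₀ :=
      (hdf u₀ hu₀).pow 4
    have hC : HasDerivAt (fun u => (f u)^2) (2 * (f u₀)^1 * f' u₀) u₀ :=
      (hdf u₀ hu₀).pow 2
    have hgd : HasDerivAt g
        (12*(t-1)*(8-2*t)*(2 * (f' u₀)^1 * f'' u₀)
          - 6*t^2*(t+5)*(t+2)*(4 * (f u₀)^3 * f' u₀)
          + 4*(4*t+2)*(t-1)*(t+2)*(2 * (f u₀)^1 * f' u₀)) u₀ := by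
      exact ((hA.const_mul _).sub (hB.const_mul _)).add (hC.const_mul _)
    have hev : g =ᶠ[nhds u₀] fun _ => (0:ℝ) :=
      Filter.eventuallyEq_of_mem (isOpen_Ioo.mem_nhds hu₀) hg0
    have hzero : HasDerivAt (fun _ => (0:ℝ)) _ u₀ := hgd.congr_of_eventuallyEq hev.symm
    have hD : 12*(t-1)*(8-2*t)*(2 * (f' u₀)^1 * f'' u₀)
          - 6*t^2*(t+5)*(t+2)*(4 * (f u₀)^3 * f' u₀)
          + 4*(4*t+2)*(t-1)*(t+2)*(2 * (f u₀)^1 * f' u₀) = 0 := by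
      have := hzero.unique (hasDerivAt_const u₀ (0:ℝ))
      linarith
    -- factor out 2 f' u₀
    have hBr : 12*(t-1)*(8-2*t)*(f'' u₀)
        = 12*t^2*(t+5)*(t+2)*x^3 - 4*(4*t+2)*(t-1)*(t+2)*x := by
      have hfac : (2 * f' u₀) * (12*(t-1)*(8-2*t)*(f'' u₀)
          - (12*t^2*(t+5)*(t+2)*x^3 - 4*(4*t+2)*(t-1)*(t+2)*x)) = 0 := by
        linear_combination hD
      rcases mul_eq_zero.mp hfac with h | h
      · exact absurd (by linarith : f' u₀ = 0) hfp
      · linarith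
    -- combine with ODE1 and R to get an impossible positive identity
    have h1 := H1 u₀ hu₀
    have hRu := hR u₀ hu₀
    have key : (t+2)*(8*(t-1)^2*(t+5)*x^2 + 3*t^2*(12*t+6)*x^4) = 0 := by
      linear_combination (8-2*t) * h1 + (t+5) * hRu - ((t+2)*x) * hBr
    have hpos : 0 < (t+2)*(8*(t-1)^2*(t+5)*x^2 + 3*t^2*(12*t+6)*x^4) := by
      have h1' : (0:ℝ) < 8*(t-1)^2*(t+5)*x^2 :=
        mul_pos (mul_pos (mul_pos (by norm_num : (0:ℝ) < 8) (by nlinarith : (0:ℝ) < (t-1)^2))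
          (by linarith : (0:ℝ) < t+5)) (pow_pos hx 2)
      have h2' : (0:ℝ) < 3*t^2*(12*t+6)*x^4 :=
        mul_pos (mul_pos (by nlinarith : (0:ℝ) < 3*t^2) (by linarith : (0:ℝ) < 12*t+6))
          (pow_pos hx 4)
      exact mul_pos (by linarith : (0:ℝ) < t+2) (add_pos h1' h2')
    linarith [key, hpos]
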